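/- arXiv:1103.1041 — 6 statements merged into one kernel-verified Lean document; each statement's English description precedes it below -/
import Mathlib

section
/- Let G be a finite group, H ≤ G a subgroup, σ an irreducible unitary representation of G with character χ^σ, and suppose the restriction to H of the adjoint representation σ' decomposes as Res^G_H σ' = ρ_1 ⊕ ρ_2 ⊕ ⋯ ⊕ ρ_m with ρ_1,…,ρ_m pairwise inequivalent irreducible representations of H (equivalently, the character of Res^G_H σ' equals χ^{ρ_1}+⋯+χ^{ρ_m}). Set ρ = ρ_1 with dimension d_ρ and character χ^ρ. Then the generalized character φ_{σ,ρ} satisfies φ_{σ,ρ}(h) = (1/d_ρ) χ^ρ(h) for every h ∈ H. -/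
/-!
Since the eigenvalues of `σ(g)` are roots of unity, `conj (χ^σ g) = χ^σ g⁻¹`, so the hypothesis
turns the sum into `∑ᵢ (1/|H|) ∑ₓ χ^{ρᵢ}(h x) χ^ρ(x⁻¹)`. For irreducible `V`, `W`, Schur's lemma
makes `∑ₓ χ^W(x⁻¹) V(x)` a scalar, and orthogonality of characters computes it from its trace;
hence `(1/|G|) ∑ₓ χ^V(g x) χ^W(x⁻¹)` is `χ^V(g) / d_V` if `V ≅ W` and `0` otherwise.
Pairwise inequivalence of the `ρᵢ` leaves only the term of `ρ = ρ₀`.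
-/

universe u

open CategoryTheory Module

theorem LinearMap.trace_eq_sum_of_basis_eigenvectors {R M ι : Type*} [CommRing R]
    [AddCommGroup M] [Module R M] [Fintype ι] (b : Basis ι R M)
    {f : Module.End R M} (μ : ι → R) (hf : ∀ i, f (b i) = μ i • b i) :
    LinearMap.trace R M f = ∑ i, μ i := by
  classical
  rw [LinearMap.trace_eq_matrix_trace R b, Matrix.trace]
  refine Finset.sum_congr rfl fun i _ => ?_
  simp [LinearMap.toMatrix_apply, hf]

theorem Module.End.exists_basis_eigenvectors_of_isOfFinOrder {K : Type u} {V : Type*} [Field K]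
    [IsAlgClosed K] [CharZero K] [AddCommGroup V] [Module K V] [FiniteDimensional K V]
    {f : Module.End K V} (hf : IsOfFinOrder f) :
    ∃ (ι : Type u) (_ : Fintype ι) (b : Basis ι K V) (μ : ι → K), ∀ i, f (b i) = μ i • b i := by
  classical
  obtain ⟨n, hn, hfn⟩ := hf.exists_pow_eq_one
  have hss : f.IsSemisimple := by
    have hsep : (Polynomial.X ^ n - Polynomial.C (1 : K)).Separable :=
      Polynomial.separable_X_pow_sub_C 1 (by exact_mod_cast hn.ne') one_ne_zero
    exact Module.End.isSemisimple_of_squarefree_aeval_eq_zero hsep.squarefree (by simp [hfn])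
  have hint : DirectSum.IsInternal f.eigenspace :=
    DirectSum.isInternal_submodule_of_iSupIndep_of_iSup_eq_top
      (Module.End.independent_genEigenspace f 1) hss.iSup_eigenspace_eq_top
  let b := hint.collectedBasis fun μ => Module.finBasis K (f.eigenspace μ)
  exact ⟨_, IsNoetherian.fintypeBasisIndex b, b, fun i => i.1,
    fun i => Module.End.mem_eigenspace_iff.mp (hint.collectedBasis_mem _ i)⟩

theorem Module.End.conj_trace_eq_trace_of_isOfFinOrder {V : Type*} [AddCommGroup V] [Module ℂ V]
    [FiniteDimensional ℂ V] {f g : Module.End ℂ V} (hf : IsOfFinOrder f) (hgf : g * f = 1) :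
    starRingEnd ℂ (LinearMap.trace ℂ V f) = LinearMap.trace ℂ V g := by
  obtain ⟨ι, _, b, μ, hb⟩ := f.exists_basis_eigenvectors_of_isOfFinOrder hf
  obtain ⟨n, hn, hfn⟩ := hf.exists_pow_eq_one
  have hμ : ∀ i, μ i ^ n = 1 := fun i => by
    have := Module.End.HasEigenvector.pow_apply
      ⟨Module.End.mem_eigenspace_iff.mpr (hb i), b.ne_zero i⟩ n
    rw [hfn, Module.End.one_apply] at this
    exact smul_left_injective ℂ (b.ne_zero i) (this.symm.trans (one_smul ℂ _).symm)
  have hg : ∀ i, g (b i) = (μ i)⁻¹ • b i := fun i => by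
    have hμ0 : μ i ≠ 0 := fun h => by simpa [h, hn.ne'] using hμ i
    rw [eq_inv_smul_iff₀ hμ0, ← map_smul, ← hb, ← Module.End.mul_apply, hgf,
      Module.End.one_apply]
  rw [LinearMap.trace_eq_sum_of_basis_eigenvectors b μ hb,
    LinearMap.trace_eq_sum_of_basis_eigenvectors b _ hg, map_sum]
  exact Finset.sum_congr rfl fun i _ =>
    (Complex.inv_eq_conj (Complex.norm_eq_one_of_pow_eq_one (hμ i) hn.ne')).symm

namespace FDRep

theorem conj_character_of_isOfFinOrder {G : Type*} [Group G] (V : FDRep ℂ G) {g : G}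
    (hg : IsOfFinOrder g) : starRingEnd ℂ (V.character g) = V.character g⁻¹ :=
  Module.End.conj_trace_eq_trace_of_isOfFinOrder (V.ρ.isOfFinOrder hg)
    (by rw [← map_mul, inv_mul_cancel, map_one])

theorem finrank_pos_of_simple {k G : Type*} [Field k] [Monoid G] (V : FDRep k G) [Simple V] :
    0 < finrank k V := by
  rw [Module.finrank_pos_iff, ← not_subsingleton_iff_nontrivial]
  intro hV
  exact id_nonzero V (by ext v; exact Subsingleton.elim _ _)

variable {k G : Type*} [Field k] [IsAlgClosed k] [Group G] [Fintype G]

theorem finrank_smul_sum_smul_ρ_eq_smul_one (V : FDRep k G) [Simple V] (f : G → k)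
    (hf : ∀ g s, f (s * g * s⁻¹) = f g) :
    (finrank k V : k) • ∑ x, f x • V.ρ x = (∑ x, f x * V.character x) • 1 := by
  set T := ∑ x, f x • V.ρ x
  have hT : ∀ s, V.ρ s * T = T * V.ρ s := fun s => by
    simp only [T, Finset.mul_sum, Finset.sum_mul, mul_smul_comm, smul_mul_assoc, ← map_mul]
    refine Fintype.sum_equiv (MulAut.conj s).toEquiv _ _ fun x => ?_
    simp [hf]
  let Tm : V ⟶ V := ⟨InducedCategory.homMk (ModuleCat.ofHom T), fun s => by
    ext v; exact LinearMap.congr_fun (hT s).symm v⟩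
  obtain ⟨c, hc⟩ := endomorphism_simple_eq_smul_id k Tm
  have hTc : T = c • 1 := (congrArg (fun φ : V ⟶ V => φ.hom.hom.hom) hc).symm
  have htrace : ∑ x, f x * V.character x = c * finrank k V := by
    simpa [T, map_sum, character] using congrArg (LinearMap.trace k V) hTc
  rw [hTc, htrace, smul_smul, mul_comm]

open scoped Classical in
theorem card_inv_mul_sum_char_mul_char_inv [CharZero k] (V W : FDRep k G) [Simple V] [Simple W]
    (g : G) :
    (Nat.card G : k)⁻¹ * ∑ x, V.character (g * x) * W.character x⁻¹ =
      if Nonempty (V ≅ W) then (finrank k V : k)⁻¹ * V.character g else 0 := by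
  have hT := finrank_smul_sum_smul_ρ_eq_smul_one V (fun x => W.character x⁻¹)
    fun g s => by simpa [mul_assoc] using W.char_conj g⁻¹ s
  have hconv : (finrank k V : k) * ∑ x, V.character (g * x) * W.character x⁻¹ =
      (∑ x, V.character x * W.character x⁻¹) * V.character g := by
    simpa [Finset.mul_sum, map_sum, character, mul_comm, mul_left_comm]
      using congrArg (fun T => LinearMap.trace k V (V.ρ g * T)) hT
  have hd : (finrank k V : k) ≠ 0 := by exact_mod_cast (finrank_pos_of_simple V).ne'
  have : Invertible (Nat.card G : k) := invertibleOfNonzero (by exact_mod_cast Nat.card_pos.ne')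
  calc (Nat.card G : k)⁻¹ * ∑ x, V.character (g * x) * W.character x⁻¹
      = (finrank k V : k)⁻¹ * ((Nat.card G : k)⁻¹ * ∑ x, V.character x * W.character x⁻¹) *
          V.character g := by
        rw [← inv_mul_cancel_left₀ hd (∑ x, _), hconv]
        ring
    _ = _ := by rw [char_orthonormal]; split_ifs <;> simp

end FDRep

open FDRep CategoryTheory

theorem generalized_character_on_subgroup_general
    {G : Type} [Group G] (H : Subgroup G) [Fintype H]
    (V : FDRep ℂ G)
    (m : ℕ) (hm : 0 < m) (ρ : Fin m → FDRep ℂ H) [∀ i, Simple (ρ i)]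
    (hpairwise : ∀ i j : Fin m, i ≠ j → IsEmpty (ρ i ≅ ρ j))
    (hres : ∀ h : H, V.character ((h : G)⁻¹) = ∑ i : Fin m, (ρ i).character h) :
    ∀ h : H,
      (Fintype.card H : ℂ)⁻¹ *
          ∑ x : H, (starRingEnd ℂ) (V.character ((h : G) * (x : G))) *
            (starRingEnd ℂ) ((ρ ⟨0, hm⟩).character x) =
        (Module.finrank ℂ (ρ ⟨0, hm⟩) : ℂ)⁻¹ * (ρ ⟨0, hm⟩).character h := by
  intro h
  set i₀ : Fin m := ⟨0, hm⟩
  have hV : ∀ x : H, starRingEnd ℂ (V.character (h * x)) = ∑ i, (ρ i).character (h * x) :=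
    fun x => by
      rw [← hres, ← Subgroup.coe_mul]
      exact V.conj_character_of_isOfFinOrder
        (H.subtype.isOfFinOrder (isOfFinOrder_of_finite (h * x)))
  have hρ : ∀ x : H, starRingEnd ℂ ((ρ i₀).character x) = (ρ i₀).character x⁻¹ :=
    fun x => (ρ i₀).conj_character_of_isOfFinOrder (isOfFinOrder_of_finite x)
  calc (Fintype.card H : ℂ)⁻¹ * ∑ x : H, starRingEnd ℂ (V.character (h * x)) *
        starRingEnd ℂ ((ρ i₀).character x)
      = ∑ i, (Nat.card H : ℂ)⁻¹ * ∑ x : H, (ρ i).character (h * x) * (ρ i₀).character x⁻¹ := by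
        simp only [hV, hρ, Finset.sum_mul, Nat.card_eq_fintype_card, Finset.mul_sum]
        exact Finset.sum_comm
    _ = (Nat.card H : ℂ)⁻¹ * ∑ x : H, (ρ i₀).character (h * x) * (ρ i₀).character x⁻¹ := by
        refine Finset.sum_eq_single_of_mem i₀ (Finset.mem_univ _) fun i _ hi => ?_
        rw [card_inv_mul_sum_char_mul_char_inv, if_neg (not_nonempty_iff.mpr (hpairwise i i₀ hi))]
    _ = _ := by rw [card_inv_mul_sum_char_mul_char_inv, if_pos ⟨Iso.refl _⟩]

/-- Let `G` be a finite group, `H ≤ G`, `V = σ` an irreducible complex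
representation of `G`, and suppose that the restriction to `H` of the adjoint (dual)
representation `σ'` (whose character is `g ↦ χ^σ(g⁻¹)`) decomposes as `ρ 0 ⊕ ⋯ ⊕ ρ (m-1)` with
the `ρ i` pairwise inequivalent irreducible representations of `H` (expressed at the level of
characters).  Then the generalized character
`φ_{σ,ρ}(g) = (1/|H|) ∑_{x ∈ H} conj(χ^σ(g x)) conj(χ^ρ(x))`, with `ρ = ρ 0`, satisfies
`φ_{σ,ρ}(h) = (1/d_ρ) χ^ρ(h)` for every `h ∈ H`. -/
theorem generalized_character_on_subgroup
    {G : Type} [Group G] [Fintype G] (H : Subgroup G) [Fintype H]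
    (V : FDRep ℂ G) [Simple V]
    (m : ℕ) (hm : 0 < m) (ρ : Fin m → FDRep ℂ H) [∀ i, Simple (ρ i)]
    (hpairwise : ∀ i j : Fin m, i ≠ j → IsEmpty (ρ i ≅ ρ j))
    (hres : ∀ h : H, V.character ((h : G)⁻¹) = ∑ i : Fin m, (ρ i).character h) :
    ∀ h : H,
      (Fintype.card H : ℂ)⁻¹ *
          ∑ x : H, (starRingEnd ℂ) (V.character ((h : G) * (x : G))) *
            (starRingEnd ℂ) ((ρ ⟨0, hm⟩).character x) =
        (Module.finrank ℂ (ρ ⟨0, hm⟩) : ℂ)⁻¹ * (ρ ⟨0, hm⟩).character h :=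
  generalized_character_on_subgroup_general H V m hm ρ hpairwise hres
end

section
/- Let G be a finite group, H ≤ G a subgroup, σ an irreducible unitary representation of G, and suppose Res^G_H σ' = ρ_1 ⊕ ρ_2 ⊕ ⋯ ⊕ ρ_m with ρ_1,…,ρ_m pairwise inequivalent irreducible representations of H; set ρ = ρ_1. If ψ ∈ L(G) is a linear combination ψ = Σ_{i=1}^m c_i φ_{σ,ρ_i} (c_i ∈ ℂ) — i.e. ψ is H-conjugacy invariant and lies in the σ-isotypic component of L(G) — and ψ(h) = (1/d_ρ) χ^ρ(h) for all h ∈ H, then ψ = φ_{σ,ρ} (equivalently c_i = δ_{i,1}). -/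
/-!
Characters of finite groups satisfy `conj χ(g) = χ(g⁻¹)`, so on `H` the decomposition of
`Res σ'` turns each `φ_{σ,ρ_i}` into a sum of convolutions of irreducible characters of `H`. By Schur's lemma `∑ₓ χ^{ρ_i}(x⁻¹) ρ_j(x)` is a scalar, which gives
`χ^{ρ_j} ⋆ χ^{ρ_i} = δ_{ij} (|H| / d_{ρ_i}) χ^{ρ_i}`, hence `φ_{σ,ρ_i}(h) = χ^{ρ_i}(h) / d_{ρ_i}`.
So `ψ|_H = ∑ c_i χ^{ρ_i} / d_{ρ_i}`, and linear independence of irreducible characters forces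
`c_i = δ_{i,1}`.
-/

open FDRep CategoryTheory Module LinearMap

namespace Module.End

variable {K V : Type*} [Field K] [AddCommGroup V] [Module K V] [FiniteDimensional K V]

theorem trace_eq_mul_finrank_of_isNilpotent_sub {f : End K V} {μ : K}
    (hf : IsNilpotent (f - algebraMap K _ μ)) : trace K V f = μ * finrank K V := by
  simpa [← mul_eq_comp] using
    trace_comp_eq_mul_of_commute_of_isNilpotent μ (Commute.one_left f) hf

theorem mul_trace_eq_finrank_of_isNilpotent_sub {f g : End K V} {μ : K} (hgf : g * f = 1)
    (hf : IsNilpotent (f - algebraMap K _ μ)) : μ * trace K V g = finrank K V := by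
  have hcomm : Commute g f := by rw [Commute, SemiconjBy, hgf, mul_eq_one_comm.mp hgf]
  rw [← trace_comp_eq_mul_of_commute_of_isNilpotent μ hcomm hf, ← mul_eq_comp, hgf, trace_one]

omit [FiniteDimensional K V] in
theorem pow_eq_one_of_hasEigenvalue {f : End K V} {μ : K} {n : ℕ} (hfn : f ^ n = 1)
    (hμ : f.HasEigenvalue μ) : μ ^ n = 1 := by
  obtain ⟨x, hx⟩ := hμ.exists_hasEigenvector
  have hpow : (f ^ n) x = μ ^ n • x := HasUnifEigenvector.pow_apply hx n
  rw [hfn, one_apply] at hpow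
  exact smul_left_injective K hx.2 (hpow.symm.trans (one_smul K x).symm)

/-- On the generalized eigenspace of `μ`, `f` acts as `μ` and `g` as `μ⁻¹ = conj μ`, up to
nilpotents. -/
theorem star_trace_eq_trace_of_pow_eq_one {V : Type*} [AddCommGroup V] [Module ℂ V]
    [FiniteDimensional ℂ V] {f g : End ℂ V} {n : ℕ} (hn : n ≠ 0) (hfn : f ^ n = 1)
    (hgf : g * f = 1) : starRingEnd ℂ (trace ℂ V f) = trace ℂ V g := by
  have hcomm : Commute f g := by rw [Commute, SemiconjBy, hgf, mul_eq_one_comm.mp hgf]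
  have hint := DirectSum.isInternal_submodule_of_iSupIndep_of_iSup_eq_top
    f.independent_maxGenEigenspace f.iSup_maxGenEigenspace_eq_top
  have hfin := WellFoundedGT.finite_ne_bot_of_iSupIndep f.independent_maxGenEigenspace
  rw [trace_eq_sum_trace_restrict' hint hfin (f.mapsTo_maxGenEigenspace_of_comm rfl),
    trace_eq_sum_trace_restrict' hint hfin (f.mapsTo_maxGenEigenspace_of_comm hcomm), map_sum]
  refine Finset.sum_congr rfl fun μ hμ => ?_
  have hnil := f.isNilpotent_restrict_maxGenEigenspace_sub_algebraMap μ
  have hμn : μ ^ n = 1 := pow_eq_one_of_hasEigenvalue hfn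
    (HasUnifEigenvalue.lt zero_lt_one (hfin.mem_toFinset.mp hμ))
  have hμ0 : μ ≠ 0 := by rintro rfl; simp [hn] at hμn
  have hconj : starRingEnd ℂ μ = μ⁻¹ :=
    (Complex.inv_eq_conj (Complex.norm_eq_one_of_pow_eq_one hμn hn)).symm
  have hrestrict : g.restrict (f.mapsTo_maxGenEigenspace_of_comm hcomm μ) *
      f.restrict (f.mapsTo_maxGenEigenspace_of_comm rfl μ) = 1 := by
    ext x
    exact congr($hgf x)
  have hgf' := mul_trace_eq_finrank_of_isNilpotent_sub hrestrict hnil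
  rw [trace_eq_mul_finrank_of_isNilpotent_sub hnil, map_mul, map_natCast, hconj, ← hgf',
    inv_mul_cancel_left₀ hμ0]

end Module.End

namespace FDRep

theorem star_character {K : Type*} [Group K] [Finite K] (W : FDRep ℂ K) (g : K) :
    starRingEnd ℂ (W.character g) = W.character g⁻¹ :=
  Module.End.star_trace_eq_trace_of_pow_eq_one Nat.card_pos.ne'
    (by rw [← map_pow, pow_card_eq_one', map_one]) (by rw [← map_mul, inv_mul_cancel, map_one])

instance nontrivial_of_simple {K : Type*} [Monoid K] (X : FDRep ℂ K) [Simple X] :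
    Nontrivial X := by
  refine not_subsingleton_iff_nontrivial.mp fun _ => id_nonzero X ?_
  ext v
  exact Subsingleton.elim _ _

theorem exists_eq_smul_one_of_commute {K : Type*} [Monoid K] (X : FDRep ℂ K) [Simple X]
    {T : Module.End ℂ X} (hT : ∀ k, Commute (X.ρ k) T) : ∃ c : ℂ, T = c • 1 := by
  let Thom : X ⟶ X := Action.Hom.mk (FGModuleCat.ofHom T) fun k => by
    ext v
    exact congr($((hT k).eq.symm) v)
  obtain ⟨c, hc⟩ := endomorphism_simple_eq_smul_id ℂ Thom
  exact ⟨c, congr(($hc).hom.hom.hom).symm⟩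

theorem commute_ρ_sum_smul_ρ {K : Type*} [Group K] [Fintype K] (X : FDRep ℂ K) {f : K → ℂ}
    (hf : ∀ k x, f (k * x * k⁻¹) = f x) (k : K) : Commute (X.ρ k) (∑ x, f x • X.ρ x) := by
  simp only [Commute, SemiconjBy, Finset.mul_sum, Finset.sum_mul, mul_smul_comm, smul_mul_assoc]
  refine Fintype.sum_equiv (MulAut.conj k).toEquiv _ _ fun x => ?_
  rw [MulEquiv.toEquiv_eq_coe, MulEquiv.coe_toEquiv, MulAut.conj_apply, hf, ← map_mul, ← map_mul,
    inv_mul_cancel_right]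

theorem sum_mul_character_mul {K : Type*} [Group K] [Fintype K] (X : FDRep ℂ K) [Simple X]
    {f : K → ℂ} (hf : ∀ k x, f (k * x * k⁻¹) = f x) (g : K) :
    ∑ x, f x * X.character (g * x) =
      (∑ x, f x * X.character x) / finrank ℂ X * X.character g := by
  obtain ⟨c, hc⟩ := X.exists_eq_smul_one_of_commute (X.commute_ρ_sum_smul_ρ hf)
  have htrace : ∑ x, f x * X.character x = c * finrank ℂ X := by
    simpa [map_sum, character] using congr(trace ℂ X $hc)
  have htrace_mul : ∑ x, f x * X.character (g * x) = c * X.character g := by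
    simpa [Finset.mul_sum, map_sum, character, mul_smul_comm] using
      congr(trace ℂ X (X.ρ g * $hc))
  rw [htrace_mul, htrace, mul_div_cancel_right₀ _ (Nat.cast_ne_zero.mpr finrank_pos.ne')]

open scoped Classical in
theorem sum_character_mul_character_inv {K : Type*} [Group K] [Fintype K] (X Y : FDRep ℂ K)
    [Simple X] [Simple Y] :
    ∑ g, X.character g * Y.character g⁻¹ =
      if Nonempty (X ≅ Y) then (Fintype.card K : ℂ) else 0 := by
  have : Invertible (Nat.card K : ℂ) := invertibleOfNonzero (by simp)
  have h := char_orthonormal X Y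
  rw [inv_mul_eq_iff_eq_mul₀ (by simp), Nat.card_eq_fintype_card] at h
  rw [h]
  split_ifs <;> simp

open scoped Classical in
theorem sum_character_inv_mul_character_mul {K : Type*} [Group K] [Fintype K] (X Y : FDRep ℂ K)
    [Simple X] [Simple Y] (g : K) :
    ∑ x, Y.character x⁻¹ * X.character (g * x) =
      if Nonempty (X ≅ Y) then (Fintype.card K : ℂ) / finrank ℂ X * X.character g else 0 := by
  rw [X.sum_mul_character_mul (fun k x => by simpa [mul_assoc] using Y.char_conj x⁻¹ k) g]
  simp_rw [mul_comm (Y.character _), sum_character_mul_character_inv]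
  split_ifs <;> simp

theorem linearIndependent_character {K ι : Type*} [Group K] [Fintype K]
    (ρ : ι → FDRep ℂ K) [∀ i, Simple (ρ i)] (hρ : Pairwise fun i j => IsEmpty (ρ i ≅ ρ j)) :
    LinearIndependent ℂ fun i => (ρ i).character := by
  refine linearIndependent_iff'.mpr fun s a ha i hi => ?_
  have hpair : ∑ g, (∑ j ∈ s, a j * (ρ j).character g) * (ρ i).character g⁻¹ =
      a i * Fintype.card K := by
    simp_rw [Finset.sum_mul, mul_assoc]
    rw [Finset.sum_comm]
    simp_rw [← Finset.mul_sum, sum_character_mul_character_inv]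
    rw [Finset.sum_eq_single_of_mem i hi fun j _ hj => by simp [not_nonempty_iff.mpr (hρ hj)]]
    simp
  have hzero : ∀ g, ∑ j ∈ s, a j * (ρ j).character g = 0 := by
    simpa [Finset.sum_apply] using congrFun ha
  simpa [hzero] using hpair

end FDRep

noncomputable def generalizedCharacter {G : Type*} [Group G] (V : FDRep ℂ G) (H : Subgroup G)
    [Fintype H] (W : FDRep ℂ H) (g : G) : ℂ :=
  (Fintype.card H : ℂ)⁻¹ *
    ∑ x : H, starRingEnd ℂ (V.character (g * x)) * starRingEnd ℂ (W.character x)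

theorem generalizedCharacter_apply_coe {G : Type*} [Group G] (H : Subgroup G) [Fintype H]
    (V : FDRep ℂ G) {ι : Type*} [Fintype ι] (ρ : ι → FDRep ℂ H) [∀ i, Simple (ρ i)]
    (hρ : Pairwise fun i j => IsEmpty (ρ i ≅ ρ j))
    (hres : ∀ h : H, V.character ((h : G)⁻¹) = ∑ i, (ρ i).character h) (i : ι) (h : H) :
    generalizedCharacter V H (ρ i) h = (finrank ℂ (ρ i) : ℂ)⁻¹ * (ρ i).character h := by
  have hV : ∀ x : H, starRingEnd ℂ (V.character (h * x)) = ∑ j, (ρ j).character (h * x) := by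
    intro x
    simpa [star_character] using congr(starRingEnd ℂ $(hres (h * x)⁻¹))
  simp_rw [generalizedCharacter, hV, star_character, Finset.sum_mul]
  rw [Finset.sum_comm]
  simp_rw [mul_comm ((ρ _).character (h * _)), sum_character_inv_mul_character_mul]
  rw [Finset.sum_eq_single i (fun j _ hj => by simp [not_nonempty_iff.mpr (hρ hj)]) (by simp),
    if_pos ⟨Iso.refl _⟩]
  field_simp

theorem generalized_character_uniqueness_general
    {G : Type} [Group G] (H : Subgroup G) [Fintype H]
    (V : FDRep ℂ G)
    (m : ℕ) (hm : 0 < m) (ρ : Fin m → FDRep ℂ H) [∀ i, Simple (ρ i)]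
    (hpairwise : ∀ i j : Fin m, i ≠ j → IsEmpty (ρ i ≅ ρ j))
    (hres : ∀ h : H, V.character ((h : G)⁻¹) = ∑ i : Fin m, (ρ i).character h)
    (ψ : G → ℂ) (c : Fin m → ℂ)
    (hψ : ∀ g : G, ψ g = ∑ i : Fin m, c i *
      ((Fintype.card H : ℂ)⁻¹ * ∑ x : H, (starRingEnd ℂ) (V.character (g * (x : G))) *
        (starRingEnd ℂ) ((ρ i).character x)))
    (hval : ∀ h : H, ψ (h : G) =
      (Module.finrank ℂ (ρ ⟨0, hm⟩) : ℂ)⁻¹ * (ρ ⟨0, hm⟩).character h) :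
    ∀ g : G, ψ g =
      (Fintype.card H : ℂ)⁻¹ * ∑ x : H, (starRingEnd ℂ) (V.character (g * (x : G))) *
        (starRingEnd ℂ) ((ρ ⟨0, hm⟩).character x) := by
  set i₀ : Fin m := ⟨0, hm⟩
  have hρ : Pairwise fun i j => IsEmpty (ρ i ≅ ρ j) := fun i j => hpairwise i j
  have hφ := generalizedCharacter_apply_coe H V ρ hρ hres
  have hψ' : ∀ g, ψ g = ∑ i, c i * generalizedCharacter V H (ρ i) g := hψ
  have hcoeff := Fintype.linearIndependent_iffₛ.mp (linearIndependent_character ρ hρ)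
    (fun i => c i * (finrank ℂ (ρ i) : ℂ)⁻¹)
    (fun i => if i = i₀ then (finrank ℂ (ρ i₀) : ℂ)⁻¹ else 0) <| funext fun h => by
      simpa [Finset.sum_apply, hφ, mul_assoc, ite_smul, ite_apply] using
        (hψ' h).symm.trans (hval h)
  have hc : ∀ i, c i = if i = i₀ then 1 else 0 := by
    intro i
    have hd : (finrank ℂ (ρ i) : ℂ) ≠ 0 := Nat.cast_ne_zero.mpr finrank_pos.ne'
    have hci := hcoeff i
    split_ifs at hci ⊢ with hi
    · subst hi; field_simp at hci; linear_combination hci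
    · simpa [hd] using hci
  intro g
  simp [hψ' g, hc, generalizedCharacter]

/-- With `G`, `H`, `σ = V`, `ρ i` as in Statement 0 (in particular the character
of the restriction to `H` of the adjoint representation `σ'` equals `∑ i, χ^{ρ i}` with the `ρ i`
pairwise inequivalent irreducibles of `H`), if `ψ ∈ L(G)` is a linear combination
`ψ = ∑ i, c i • φ_{σ, ρ i}` of the generalized characters
`φ_{σ,ρ_i}(g) = (1/|H|) ∑_{x ∈ H} conj(χ^σ(g x)) conj(χ^{ρ i}(x))`,
and `ψ(h) = (1/d_{ρ 0}) χ^{ρ 0}(h)` for all `h ∈ H`, then `ψ = φ_{σ, ρ 0}`. -/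
theorem generalized_character_uniqueness
    {G : Type} [Group G] [Fintype G] (H : Subgroup G) [Fintype H]
    (V : FDRep ℂ G) [Simple V]
    (m : ℕ) (hm : 0 < m) (ρ : Fin m → FDRep ℂ H) [∀ i, Simple (ρ i)]
    (hpairwise : ∀ i j : Fin m, i ≠ j → IsEmpty (ρ i ≅ ρ j))
    (hres : ∀ h : H, V.character ((h : G)⁻¹) = ∑ i : Fin m, (ρ i).character h)
    (ψ : G → ℂ) (c : Fin m → ℂ)
    (hψ : ∀ g : G, ψ g = ∑ i : Fin m, c i *
      ((Fintype.card H : ℂ)⁻¹ * ∑ x : H, (starRingEnd ℂ) (V.character (g * (x : G))) *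
        (starRingEnd ℂ) ((ρ i).character x)))
    (hval : ∀ h : H, ψ (h : G) =
      (Module.finrank ℂ (ρ ⟨0, hm⟩) : ℂ)⁻¹ * (ρ ⟨0, hm⟩).character h) :
    ∀ g : G, ψ g =
      (Fintype.card H : ℂ)⁻¹ * ∑ x : H, (starRingEnd ℂ) (V.character (g * (x : G))) *
        (starRingEnd ℂ) ((ρ ⟨0, hm⟩).character x) :=
  generalized_character_uniqueness_general H V m hm ρ hpairwise hres ψ c hψ hval
end

section
/- Let λ ⊢ n, μ ⊢ n-1 with λ → μ, and fix a λ-tableau t with 1 in the box λ\μ. Let θ, γ, σ ∈ S_n with γσ = θ. If Ñ^{λ,μ}(γ,σ) ≠ 0, then supp(γ) ⊆ supp(θ) and supp(σ) ⊆ supp(θ). In particular, if θ ∈ S_l then γ, σ ∈ S_l. -/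
/-- `Ñ^{λ,μ}(γ,σ)`: the number of `π ∈ S̃_{n-1}` (permutations fixing the entry `1`, encoded as
`0 : Fin n`) such that each cycle of `γ` is contained in a column of the tableau `π t` and each
cycle of `σ` is contained in a row of `π t` (the entry `m` of `π t` occupies the cell
`t (π⁻¹ m)`). -/
noncomputable def Ntilde {n : ℕ} (lam : YoungDiagram) (t : Fin n ≃ lam.cells)
    (γ σ : Equiv.Perm (Fin n)) : ℕ :=
  Nat.card {π : Equiv.Perm (Fin n) //
    (∀ i : Fin n, (i : ℕ) = 0 → π i = i) ∧
    (∀ a b : Fin n, γ.SameCycle a b →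
      ((t (π⁻¹ a)) : ℕ × ℕ).2 = ((t (π⁻¹ b)) : ℕ × ℕ).2) ∧
    (∀ a b : Fin n, σ.SameCycle a b →
      ((t (π⁻¹ a)) : ℕ × ℕ).1 = ((t (π⁻¹ b)) : ℕ × ℕ).1)}

/-- Let `λ ⊢ n`, `μ ⊢ n-1` with `λ → μ`, and fix a `λ`-tableau `t` with `1` in
the box `λ∖μ`.  Let `θ, γ, σ ∈ S_n` with `γσ = θ`.  If `Ñ^{λ,μ}(γ,σ) ≠ 0`, then
`supp(γ) ⊆ supp(θ)` and `supp(σ) ⊆ supp(θ)`.  In particular, if `θ ∈ S_l` then `γ, σ ∈ S_l`. -/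
theorem support_subset_of_Ntilde_ne_zero
    {n : ℕ} (hn : 2 ≤ n) (lam mu : YoungDiagram)
    (hlam : lam.card = n) (hmu : mu.card = n - 1) (hsub : mu ≤ lam)
    (box : lam.cells) (hbox : (box : ℕ × ℕ) ∉ mu)
    (t : Fin n ≃ lam.cells) (ht : ∀ i : Fin n, (i : ℕ) = 0 → t i = box)
    (θ γ σ : Equiv.Perm (Fin n)) (hθ : γ * σ = θ)
    (hN : Ntilde lam t γ σ ≠ 0) :
    (∀ i : Fin n, γ i ≠ i → θ i ≠ i) ∧ (∀ i : Fin n, σ i ≠ i → θ i ≠ i) ∧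
      (∀ l : ℕ, (∀ i : Fin n, l ≤ (i : ℕ) → θ i = i) →
        (∀ i : Fin n, l ≤ (i : ℕ) → γ i = i) ∧ (∀ i : Fin n, l ≤ (i : ℕ) → σ i = i)) := by
  obtain ⟨⟨π, hπ0, hcol, hrow⟩⟩ := (Nat.card_ne_zero.mp hN).1
  have key : ∀ i : Fin n, θ i = i → σ i = i ∧ γ i = i := by
    intro i hi
    have hγσ : γ (σ i) = i := by
      have := congrFun (congrArg (fun p : Equiv.Perm (Fin n) => (p : Fin n → Fin n)) hθ) i
      simpa using this.trans hi
    have h1 : σ.SameCycle i (σ i) := ⟨1, by simp⟩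
    have h2 : γ.SameCycle (σ i) i := ⟨1, by simpa using hγσ⟩
    have hr := hrow i (σ i) h1
    have hc := hcol (σ i) i h2
    have hcell : (t (π⁻¹ i) : ℕ × ℕ) = (t (π⁻¹ (σ i)) : ℕ × ℕ) :=
      Prod.ext hr hc.symm
    have : π⁻¹ i = π⁻¹ (σ i) := t.injective (Subtype.ext hcell)
    have hσ : σ i = i := ((Equiv.injective π⁻¹ this).symm)
    exact ⟨hσ, by rw [hσ] at hγσ; exact hγσ⟩
  have keyγ : ∀ i : Fin n, θ i = i → γ i = i := by
    intro i hi
    have := key i hi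
    have hγσ : γ (σ i) = i := by
      have := congrFun (congrArg (fun p : Equiv.Perm (Fin n) => (p : Fin n → Fin n)) hθ) i
      simpa using this.trans hi
    rw [this.1] at hγσ; exact hγσ
  refine ⟨fun i h hti => h (keyγ i hti), fun i h hti => h ((key i hti).1),
    fun l hl => ⟨fun i hli => keyγ i (hl i hli), fun i hli => (key i (hl i hli)).1⟩⟩
end

section
/- Let λ ⊢ n, μ ⊢ n-1 with λ → μ, let 2 ≤ l ≤ n, and let θ ∈ S_l. Then Σ_{γ,σ∈S_l : γσ=θ} sign(γ) Ñ^{λ,μ}_{S_l}(γ,σ) = Σ_{γ,σ∈S_l : γσ=θ} sign(γ) N̂^{λ,μ}(γ,σ); that is, in the signed sum over factorizations of θ, the count of injective maps may be replaced by the count of all maps. -/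
/-!
Write both counts as sums over maps `f` and exchange the order of summation. An injective `f`
contributes equally to both sides. If `f a = f b` with `a ≠ b`, let `τ` be the transposition
`(a b)`: the involution `(γ, σ) ↦ (γ τ, τ σ)` keeps `γ σ = θ`, and since multiplying by `τ` only
merges or splits cycles at `a` and `b`, where `f` agrees, it keeps the conditions that columns
are constant on the cycles of `γ` and rows on those of `σ`. It flips the sign of `γ`, so the
contribution of `f` to the right-hand side cancels.
-/

open scoped Classical

/-- `Ñ^{λ,μ}_{S_l}(γ,σ)`: the number of one-to-one maps `f : {1,…,l} → λ` (here `f : Fin l →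
lam.cells`) with `f(1) = λ∖μ` (the removed box), such that the column coordinate `c ∘ f` is
constant on each cycle of `γ` and the row coordinate `r ∘ f` is constant on each cycle of `σ`
(cycles of `γ, σ ∈ S_l` regarded as permutations of `{1,…,l}`, embedded in `Fin n` via
`Fin.castLE`). -/
noncomputable def NtildeSl {n : ℕ} (lam : YoungDiagram) (box : lam.cells)
    (l : ℕ) (hl : l ≤ n) (γ σ : Equiv.Perm (Fin n)) : ℕ :=
  Nat.card {f : Fin l → lam.cells //
    Function.Injective f ∧
    (∀ a : Fin l, (a : ℕ) = 0 → f a = box) ∧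
    (∀ a b : Fin l, γ.SameCycle (Fin.castLE hl a) (Fin.castLE hl b) →
      ((f a) : ℕ × ℕ).2 = ((f b) : ℕ × ℕ).2) ∧
    (∀ a b : Fin l, σ.SameCycle (Fin.castLE hl a) (Fin.castLE hl b) →
      ((f a) : ℕ × ℕ).1 = ((f b) : ℕ × ℕ).1)}

/-- `N̂^{λ,μ}(γ,σ)`: the number of all (not necessarily injective) maps `f : {1,…,l} → λ` with
`f(1) = λ∖μ`, such that `c ∘ f` is constant on each cycle of `γ` and `r ∘ f` is constant on each
cycle of `σ`. -/
noncomputable def Nhat {n : ℕ} (lam : YoungDiagram) (box : lam.cells)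
    (l : ℕ) (hl : l ≤ n) (γ σ : Equiv.Perm (Fin n)) : ℕ :=
  Nat.card {f : Fin l → lam.cells //
    (∀ a : Fin l, (a : ℕ) = 0 → f a = box) ∧
    (∀ a b : Fin l, γ.SameCycle (Fin.castLE hl a) (Fin.castLE hl b) →
      ((f a) : ℕ × ℕ).2 = ((f b) : ℕ × ℕ).2) ∧
    (∀ a b : Fin l, σ.SameCycle (Fin.castLE hl a) (Fin.castLE hl b) →
      ((f a) : ℕ × ℕ).1 = ((f b) : ℕ × ℕ).1)}

open Function

namespace Equiv.Perm

variable {α β M : Type*}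

theorem SameCycle.apply_eq_of_comp_eq {w : Perm β} {F : β → M} (hF : F ∘ w = F) {x y : β}
    (h : w.SameCycle x y) : F x = F y := by
  have hF_inv : F ∘ ⇑w⁻¹ = F := by
    conv_lhs => rw [← hF]
    ext; simp
  have hzpow : ∀ k : ℤ, F ∘ ⇑(w ^ k) = F := by
    intro k
    induction k using Int.induction_on with
    | zero => rfl
    | succ k ih => rw [zpow_add_one, coe_mul, ← comp_assoc, ih, hF]
    | pred k ih => rw [zpow_sub_one, coe_mul, ← comp_assoc, ih, hF_inv]
  obtain ⟨k, rfl⟩ := h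
  exact (congrFun (hzpow k) x).symm

theorem comp_swap_eq_self [DecidableEq β] {F : β → M} {a b : β} (hab : F a = F b) :
    F ∘ swap a b = F := by
  funext x
  rw [comp_apply, swap_apply_def]
  split_ifs with hxa hxb
  · rw [hxa, hab]
  · rw [hxb, hab]
  · rfl

theorem extend_comp_eq_self {e : α → β} (he : Injective e) {w : Perm β}
    (hw : ∀ x ∉ Set.range e, w x = x) {G : α → M}
    (hG : ∀ a b, w.SameCycle (e a) (e b) → G a = G b) (c : β → M) :
    extend e G c ∘ w = extend e G c := by
  funext x
  by_cases hx : x ∈ Set.range e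
  · obtain ⟨a, rfl⟩ := hx
    by_cases hwa : w (e a) ∈ Set.range e
    · obtain ⟨b, hb⟩ := hwa
      rw [comp_apply, ← hb, he.extend_apply, he.extend_apply]
      exact (hG a b ⟨1, by rw [zpow_one, hb]⟩).symm
    · rw [comp_apply, w.injective (hw _ hwa)]
  · rw [comp_apply, hw x hx]

theorem forall_sameCycle_mul_swap [DecidableEq β] {e : α → β} (he : Injective e) {w : Perm β}
    (hw : ∀ x ∉ Set.range e, w x = x) {G : α → M}
    (hG : ∀ a b, w.SameCycle (e a) (e b) → G a = G b) {a b : α} (hab : G a = G b) :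
    (∀ x y, (w * swap (e a) (e b)).SameCycle (e x) (e y) → G x = G y) ∧
      (∀ x y, (swap (e a) (e b) * w).SameCycle (e x) (e y) → G x = G y) := by
  set H := extend e G fun _ => G a
  have hH : H ∘ w = H := extend_comp_eq_self he hw hG _
  have hτ : H ∘ swap (e a) (e b) = H := comp_swap_eq_self (by simp only [H, he.extend_apply, hab])
  have of_comp_eq : ∀ u : Perm β, H ∘ u = H → ∀ x y, u.SameCycle (e x) (e y) → G x = G y :=
    fun u hu x y hxy => by simpa only [H, he.extend_apply] using hxy.apply_eq_of_comp_eq hu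
  exact ⟨of_comp_eq _ (by rw [coe_mul, ← comp_assoc, hH, hτ]),
    of_comp_eq _ (by rw [coe_mul, ← comp_assoc, hτ, hH])⟩

theorem sum_sum_ite_sign_eq_zero [Fintype β] [DecidableEq β] {P : Perm β → Perm β → Prop}
    [∀ γ σ, Decidable (P γ σ)] {a b : β} (hab : a ≠ b)
    (hP : ∀ γ σ, P γ σ → P (γ * swap a b) (swap a b * σ)) :
    ∑ γ : Perm β, ∑ σ : Perm β, (if P γ σ then (sign γ : ℤ) else 0) = 0 := by
  have hP_iff : ∀ γ σ, P (γ * swap a b) (swap a b * σ) ↔ P γ σ := fun γ σ =>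
    ⟨fun h => by simpa only [mul_swap_mul_self, swap_mul_self_mul] using hP _ _ h, hP γ σ⟩
  set S := ∑ γ : Perm β, ∑ σ : Perm β, (if P γ σ then (sign γ : ℤ) else 0)
  have hS : S = -S := calc
    S = ∑ γ : Perm β, ∑ σ : Perm β,
        (if P (γ * swap a b) (swap a b * σ) then (sign (γ * swap a b) : ℤ) else 0) :=
      (Fintype.sum_equiv (Equiv.mulRight (swap a b)) _ _ fun γ =>
        Fintype.sum_equiv (Equiv.mulLeft (swap a b)) _
          (fun σ => if P (γ * swap a b) σ then (sign (γ * swap a b) : ℤ) else 0) fun σ => rfl).symm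
    _ = -S := by
      simp only [hP_iff, sign_mul, sign_swap hab, S, ← Finset.sum_neg_distrib]
      push_cast
      simp only [mul_neg, mul_one, apply_ite Neg.neg, neg_zero]
  omega

end Equiv.Perm

theorem sum_sum_ite_mul_natCard {ι κ X : Type*} [Fintype ι] [Fintype κ] [Fintype X]
    (C : ι → κ → Prop) [∀ i j, Decidable (C i j)] (s : ι → κ → ℤ) (Q : ι → κ → X → Prop)
    [∀ i j x, Decidable (Q i j x)] :
    ∑ i, ∑ j, (if C i j then s i j * (Nat.card {x // Q i j x} : ℤ) else 0) =
      ∑ x, ∑ i, ∑ j, if C i j ∧ Q i j x then s i j else 0 := by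
  have hterm : ∀ i j, (if C i j then s i j * (Nat.card {x // Q i j x} : ℤ) else 0) =
      ∑ x, if C i j ∧ Q i j x then s i j else 0 := fun i j => by
    rw [Nat.card_eq_fintype_card, Fintype.card_subtype]
    split_ifs with hC
    · simp only [hC, true_and]
      rw [← Finset.sum_filter, Finset.sum_const, nsmul_eq_mul, mul_comm]
    · simp only [hC, false_and, if_false, Finset.sum_const_zero]
  simp only [hterm]
  exact (Finset.sum_congr rfl fun _ _ => Finset.sum_comm).trans Finset.sum_comm

theorem Fin.le_of_notMem_range_castLE {l n : ℕ} (hln : l ≤ n) {i : Fin n}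
    (hi : i ∉ Set.range (Fin.castLE hln)) : l ≤ i :=
  not_lt.1 fun h => hi ⟨⟨i, h⟩, rfl⟩

theorem signed_sum_injective_eq_signed_sum_all_general
    {n : ℕ} (lam : YoungDiagram) (box : lam.cells) (l : ℕ) (hln : l ≤ n)
    (θ : Equiv.Perm (Fin n)) :
    (∑ γ : Equiv.Perm (Fin n), ∑ σ : Equiv.Perm (Fin n),
      if (∀ i : Fin n, l ≤ (i : ℕ) → γ i = i) ∧ (∀ i : Fin n, l ≤ (i : ℕ) → σ i = i) ∧
          γ * σ = θ then
        (Equiv.Perm.sign γ : ℤ) * (NtildeSl lam box l hln γ σ : ℤ)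
      else 0) =
    (∑ γ : Equiv.Perm (Fin n), ∑ σ : Equiv.Perm (Fin n),
      if (∀ i : Fin n, l ≤ (i : ℕ) → γ i = i) ∧ (∀ i : Fin n, l ≤ (i : ℕ) → σ i = i) ∧
          γ * σ = θ then
        (Equiv.Perm.sign γ : ℤ) * (Nhat lam box l hln γ σ : ℤ)
      else 0) := by
  unfold NtildeSl Nhat
  rw [sum_sum_ite_mul_natCard, sum_sum_ite_mul_natCard]
  refine Finset.sum_congr rfl fun f _ => ?_
  by_cases hf : Injective f
  · simp only [hf, true_and]
  simp only [hf, false_and, and_false, if_false, Finset.sum_const_zero]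
  obtain ⟨a, b, hfab, hab⟩ := not_injective_iff.mp hf
  have he := Fin.castLE_injective hln
  refine (Equiv.Perm.sum_sum_ite_sign_eq_zero (he.ne hab) ?_).symm
  rintro γ σ ⟨⟨hγ, hσ, hγσ⟩, hbox, hcol, hrow⟩
  have hτ : ∀ i : Fin n, l ≤ (i : ℕ) → Equiv.swap (Fin.castLE hln a) (Fin.castLE hln b) i = i :=
    fun i hi => Equiv.swap_apply_of_ne_of_ne (by grind) (by grind)
  refine ⟨⟨fun i hi => ?_, fun i hi => ?_, ?_⟩, hbox, ?_, ?_⟩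
  · rw [Equiv.Perm.mul_apply, hτ i hi, hγ i hi]
  · rw [Equiv.Perm.mul_apply, hσ i hi, hτ i hi]
  · rw [mul_assoc, Equiv.swap_mul_self_mul, hγσ]
  · exact (Equiv.Perm.forall_sameCycle_mul_swap he
      (fun i hi => hγ i (Fin.le_of_notMem_range_castLE hln hi)) hcol (congrArg (·.1.2) hfab)).1
  · exact (Equiv.Perm.forall_sameCycle_mul_swap he
      (fun i hi => hσ i (Fin.le_of_notMem_range_castLE hln hi)) hrow (congrArg (·.1.1) hfab)).2

/-- Let `λ ⊢ n`, `μ ⊢ n-1` with `λ → μ`, `2 ≤ l ≤ n`, `θ ∈ S_l`.  Then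
`∑_{γ,σ ∈ S_l, γσ=θ} sign(γ) Ñ^{λ,μ}_{S_l}(γ,σ) = ∑_{γ,σ ∈ S_l, γσ=θ} sign(γ) N̂^{λ,μ}(γ,σ)`:
in the signed sum over factorizations of `θ`, the count of injective maps may be replaced by the
count of all maps. -/
theorem signed_sum_injective_eq_signed_sum_all
    {n : ℕ} (hn : 2 ≤ n) (lam mu : YoungDiagram)
    (hlam : lam.card = n) (hmu : mu.card = n - 1) (hsub : mu ≤ lam)
    (box : lam.cells) (hbox : (box : ℕ × ℕ) ∉ mu)
    (l : ℕ) (hl2 : 2 ≤ l) (hln : l ≤ n)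
    (θ : Equiv.Perm (Fin n)) (hθ : ∀ i : Fin n, l ≤ (i : ℕ) → θ i = i) :
    (∑ γ : Equiv.Perm (Fin n), ∑ σ : Equiv.Perm (Fin n),
      if (∀ i : Fin n, l ≤ (i : ℕ) → γ i = i) ∧ (∀ i : Fin n, l ≤ (i : ℕ) → σ i = i) ∧
          γ * σ = θ then
        (Equiv.Perm.sign γ : ℤ) * (NtildeSl lam box l hln γ σ : ℤ)
      else 0) =
    (∑ γ : Equiv.Perm (Fin n), ∑ σ : Equiv.Perm (Fin n),
      if (∀ i : Fin n, l ≤ (i : ℕ) → γ i = i) ∧ (∀ i : Fin n, l ≤ (i : ℕ) → σ i = i) ∧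
          γ * σ = θ then
        (Equiv.Perm.sign γ : ℤ) * (Nhat lam box l hln γ σ : ℤ)
      else 0) :=
  signed_sum_injective_eq_signed_sum_all_general lam box l hln θ
end

section
/- Let λ ⊢ n, μ ⊢ n-1 with λ → μ, and fix a λ-tableau t with 1 in the box λ\μ. Then for every θ ∈ S_n: φ_{λ,μ}(θ) = (1/(n-1)!) Σ_{γ,σ∈S_n : γσ=θ} sign(γ) Ñ^{λ,μ}(γ,σ), where φ_{λ,μ} = (1/(n-1)!) Σ_{π∈S̃_{n-1}} π E_t π^{-1}. -/
open scoped Classical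

/-- `γ` belongs to the column stabilizer `C_t` of the tableau `t : Fin n ≃ lam.cells`
(the entries `1,…,n` are encoded as `0,…,n-1 : Fin n`; a cell `(i, j)` lies in row `i` and
column `j`). -/
def InColStab {n : ℕ} (lam : YoungDiagram) (t : Fin n ≃ lam.cells)
    (γ : Equiv.Perm (Fin n)) : Prop :=
  ∀ m : Fin n, ((t (γ m)) : ℕ × ℕ).2 = ((t m) : ℕ × ℕ).2

/-- `σ` belongs to the row stabilizer `R_t` of the tableau `t : Fin n ≃ lam.cells`. -/
def InRowStab {n : ℕ} (lam : YoungDiagram) (t : Fin n ≃ lam.cells)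
    (σ : Equiv.Perm (Fin n)) : Prop :=
  ∀ m : Fin n, ((t (σ m)) : ℕ × ℕ).1 = ((t m) : ℕ × ℕ).1

open scoped Classical in
/-- The Young symmetrizer `E_t = ∑_{γ ∈ C_t} ∑_{σ ∈ R_t} sign(γ) γσ ∈ ℂ[S_n]`. -/
noncomputable def youngSym {n : ℕ} (lam : YoungDiagram) (t : Fin n ≃ lam.cells) :
    MonoidAlgebra ℂ (Equiv.Perm (Fin n)) :=
  ∑ γ : Equiv.Perm (Fin n), ∑ σ : Equiv.Perm (Fin n),
    if InColStab lam t γ ∧ InRowStab lam t σ then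
      MonoidAlgebra.single (γ * σ) ((Equiv.Perm.sign γ : ℤ) : ℂ)
    else 0

open scoped Classical in
/-- The generalized character `φ_{λ,μ} = (1/(n-1)!) ∑_{π ∈ S̃_{n-1}} π E_t π⁻¹ ∈ ℂ[S_n]`, where
`S̃_{n-1}` is the stabilizer of the point `1` (encoded as `0 : Fin n`), viewed as an element of
the group algebra, i.e. as a function on `S_n`. -/
noncomputable def genChar {n : ℕ} (lam : YoungDiagram) (t : Fin n ≃ lam.cells) :
    MonoidAlgebra ℂ (Equiv.Perm (Fin n)) :=
  ((n - 1).factorial : ℂ)⁻¹ •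
    ∑ π : Equiv.Perm (Fin n),
      if ∀ i : Fin n, (i : ℕ) = 0 → π i = i then
        MonoidAlgebra.of ℂ (Equiv.Perm (Fin n)) π * youngSym lam t *
          MonoidAlgebra.of ℂ (Equiv.Perm (Fin n)) π⁻¹
      else 0

/-!
Conjugating by `π`, the coefficient of `θ` in `π E_t π⁻¹` is the signed number of factorizations
`θ = γσ` with `π⁻¹γπ ∈ C_t` and `π⁻¹σπ ∈ R_t`. A permutation `γ` has all its cycles inside the
columns of `π t` exactly when `π⁻¹γπ` preserves every column of `t`, and likewise for rows; so
after summing over `π ∈ S̃_{n-1}` and exchanging the sums, the multiplicity of `sign γ` in the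
coefficient of `θ` is `Ñ^{λ,μ}(γ,σ)`.
-/

open Equiv Finset

namespace Equiv.Perm

theorem forall_sameCycle_imp_eq_iff {α β : Type*} (g : Perm α) (f : α → β) :
    (∀ a b, g.SameCycle a b → f a = f b) ↔ ∀ a, f (g a) = f a := by
  refine ⟨fun h a => (h a (g a) (sameCycle_apply_right.2 (SameCycle.refl g a))).symm, ?_⟩
  rintro h a b ⟨k, rfl⟩
  have hpow (m : ℕ) (x : α) : f ((g ^ m) x) = f x := by
    rw [coe_pow]; exact congrFun (Function.iterate_invariant (funext h) m) x
  obtain ⟨m, rfl | rfl⟩ := k.eq_nat_or_neg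
  · simpa using (hpow m a).symm
  · simpa using hpow m ((g ^ m)⁻¹ a)

theorem sign_conj {α : Type*} [DecidableEq α] [Fintype α] (π γ : Perm α) :
    sign (π⁻¹ * γ * π) = sign γ := by
  simp [mul_right_comm]

end Equiv.Perm

namespace MonoidAlgebra

theorem coeff_of_mul_mul_of_inv {k G : Type*} [Semiring k] [Group G] (x : MonoidAlgebra k G)
    (g θ : G) : (of k G g * x * of k G g⁻¹).coeff θ = x.coeff (g⁻¹ * θ * g) := by
  simp [mul_assoc]

end MonoidAlgebra

open MonoidAlgebra

section

variable {n : ℕ} (lam : YoungDiagram) (t : Fin n ≃ lam.cells)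

theorem forall_sameCycle_col_eq_iff_inColStab (π γ : Perm (Fin n)) :
    (∀ a b, γ.SameCycle a b → (t (π⁻¹ a) : ℕ × ℕ).2 = (t (π⁻¹ b) : ℕ × ℕ).2) ↔
      InColStab lam t (π⁻¹ * γ * π) := by
  rw [Perm.forall_sameCycle_imp_eq_iff, InColStab, ← π.forall_congr_right]
  simp

theorem forall_sameCycle_row_eq_iff_inRowStab (π σ : Perm (Fin n)) :
    (∀ a b, σ.SameCycle a b → (t (π⁻¹ a) : ℕ × ℕ).1 = (t (π⁻¹ b) : ℕ × ℕ).1) ↔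
      InRowStab lam t (π⁻¹ * σ * π) := by
  rw [Perm.forall_sameCycle_imp_eq_iff, InRowStab, ← π.forall_congr_right]
  simp

theorem natCast_Ntilde (γ σ : Perm (Fin n)) :
    (Ntilde lam t γ σ : ℂ) = ∑ π : Perm (Fin n),
      if (∀ i : Fin n, (i : ℕ) = 0 → π i = i) ∧ InColStab lam t (π⁻¹ * γ * π) ∧
        InRowStab lam t (π⁻¹ * σ * π) then 1 else 0 := by
  simp_rw [Ntilde, forall_sameCycle_col_eq_iff_inColStab, forall_sameCycle_row_eq_iff_inRowStab,
    Nat.card_eq_fintype_card, Fintype.card_subtype, natCast_card_filter]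

theorem coeff_youngSym (g : Perm (Fin n)) :
    (youngSym lam t).coeff g = ∑ γ : Perm (Fin n), ∑ σ : Perm (Fin n),
      if γ * σ = g ∧ InColStab lam t γ ∧ InRowStab lam t σ then ((Perm.sign γ : ℤ) : ℂ) else 0 := by
  simp only [youngSym, coeff_sum, Finsupp.finsetSum_apply]
  refine sum_congr rfl fun γ _ => sum_congr rfl fun σ _ => ?_
  split_ifs <;> simp_all

theorem coeff_youngSym_conj (π θ : Perm (Fin n)) :
    (youngSym lam t).coeff (π⁻¹ * θ * π) = ∑ γ : Perm (Fin n), ∑ σ : Perm (Fin n),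
      if γ * σ = θ ∧ InColStab lam t (π⁻¹ * γ * π) ∧ InRowStab lam t (π⁻¹ * σ * π) then
        ((Perm.sign γ : ℤ) : ℂ) else 0 := by
  rw [coeff_youngSym]
  let c := MulAut.conj π⁻¹
  refine (Fintype.sum_equiv c.toEquiv _ _ fun γ => Fintype.sum_equiv c.toEquiv _ _ fun σ => ?_).symm
  have hmul : c γ * c σ = π⁻¹ * θ * π ↔ γ * σ = θ := by
    rw [show π⁻¹ * θ * π = c θ by simp [c], ← map_mul, c.injective.eq_iff]
  simp only [MulEquiv.toEquiv_eq_coe, MulEquiv.coe_toEquiv, hmul]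
  simp only [c, MulAut.conj_apply, inv_inv, Perm.sign_conj]

theorem coeff_genChar (θ : Perm (Fin n)) :
    (genChar lam t).coeff θ = ((n - 1).factorial : ℂ)⁻¹ * ∑ π : Perm (Fin n),
      if ∀ i : Fin n, (i : ℕ) = 0 → π i = i then (youngSym lam t).coeff (π⁻¹ * θ * π) else 0 := by
  simp only [genChar, coeff_smul_apply, smul_eq_mul, coeff_sum, Finsupp.finsetSum_apply,
    apply_ite (fun x : MonoidAlgebra ℂ (Perm (Fin n)) => x.coeff θ), coeff_of_mul_mul_of_inv]
  simp

end

theorem genChar_eq_signed_sum_Ntilde_general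
    {n : ℕ} (lam : YoungDiagram)
    (t : Fin n ≃ lam.cells)
    (θ : Equiv.Perm (Fin n)) :
    (genChar lam t).coeff θ =
      ((n - 1).factorial : ℂ)⁻¹ *
        ∑ γ : Equiv.Perm (Fin n), ∑ σ : Equiv.Perm (Fin n),
          if γ * σ = θ then
            ((Equiv.Perm.sign γ : ℤ) : ℂ) * (Ntilde lam t γ σ : ℂ)
          else 0 := by
  simp_rw [coeff_genChar, coeff_youngSym_conj, ite_sum_zero, ← ite_and]
  congr 1
  rw [sum_comm]
  refine sum_congr rfl fun γ _ => ?_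
  rw [sum_comm]
  refine sum_congr rfl fun σ _ => ?_
  rw [natCast_Ntilde, mul_sum, ite_sum_zero]
  refine sum_congr rfl fun π _ => ?_
  rw [mul_ite, mul_one, mul_zero, ← ite_and]
  exact if_congr (by tauto) rfl rfl

/-- Let `λ ⊢ n`, `μ ⊢ n-1` with `λ → μ`, and fix a `λ`-tableau `t` with `1` in
the box `λ∖μ`.  Then for every `θ ∈ S_n`:
`φ_{λ,μ}(θ) = (1/(n-1)!) ∑_{γ,σ ∈ S_n, γσ=θ} sign(γ) Ñ^{λ,μ}(γ,σ)`, where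
`φ_{λ,μ} = (1/(n-1)!) ∑_{π ∈ S̃_{n-1}} π E_t π⁻¹`. -/
theorem genChar_eq_signed_sum_Ntilde
    {n : ℕ} (hn : 2 ≤ n) (lam mu : YoungDiagram)
    (hlam : lam.card = n) (hmu : mu.card = n - 1) (hsub : mu ≤ lam)
    (box : lam.cells) (hbox : (box : ℕ × ℕ) ∉ mu)
    (t : Fin n ≃ lam.cells) (ht : ∀ i : Fin n, (i : ℕ) = 0 → t i = box)
    (θ : Equiv.Perm (Fin n)) :
    (genChar lam t).coeff θ =
      ((n - 1).factorial : ℂ)⁻¹ *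
        ∑ γ : Equiv.Perm (Fin n), ∑ σ : Equiv.Perm (Fin n),
          if γ * σ = θ then
            ((Equiv.Perm.sign γ : ℤ) : ℂ) * (Ntilde lam t γ σ : ℂ)
          else 0 :=
  genChar_eq_signed_sum_Ntilde_general lam t θ
end

section
/- (Main Theorem: Stanley–Féray–Śniady formula for generalized characters) Let λ ⊢ n, μ ⊢ n-1 with λ → μ, fix a λ-tableau t with 1 in the box λ\μ, let 2 ≤ l ≤ n and θ ∈ S_l. Then φ_{λ,μ}(θ) = (1/(n-1)_{l-1}) Σ_{γ,σ∈S_l : γσ=θ} sign(γ) N^{λ,μ}(γ,σ), where φ_{λ,μ} = (1/(n-1)!) Σ_{π∈S̃_{n-1}} π E_t π^{-1} and (n-1)_{l-1} = (n-1)(n-2)⋯(n-l+1) is the falling factorial. -/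
/-!
Expanding the Young symmetrizer and conjugating by `π ∈ S̃_{n-1}` gives
`(n-1)! φ_{λ,μ}(θ) = ∑_{γσ = θ} sign(γ) · #{tableaux s with 1 in λ∖μ : γ ∈ C_s, σ ∈ R_s}`.
Such a tableau exists only if `γ, σ ∈ S_l`: a point moved by `σ` but fixed by `γσ` would share
both its row and its column with another point. For `γ, σ ∈ S_l`, restricting `s` to `{1,…,l}` is
an `(n-l)!`-to-one map onto the injective maps `β : {1,…,l} → λ` whose column is constant on the
cycles of `γ`, whose row is constant on the cycles of `σ`, and with `β 1 = λ∖μ`; read as colorings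
of the cycles, these are exactly the injective colorings counted by `N^{λ,μ}(γ,σ)`.
The non-injective colorings, also counted by `N^{λ,μ}`, cancel in the signed sum: if `β x = β y`
with `x ≠ y`, then `(γ, σ) ↦ (γ (x y), (x y) σ)` is a sign-reversing involution on the pairs
compatible with `β`.
-/

open scoped Classical

/-- `N^{λ,μ}(γ,σ)`: the number of colorings `h : C(γ) ⊔ C(σ) → ℕ` of the cycles of
`γ, σ ∈ S_l` (as permutations of `{1,…,l}`) such that the color of each cycle of `γ` is a column
of `λ`, the color of each cycle of `σ` is a row of `λ`, the cycles of `γ` and of `σ` containing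
`1` receive the colors `c(λ∖μ)` and `r(λ∖μ)` respectively, and whenever a cycle `c₁` of `γ` meets
a cycle `c₂` of `σ`, the pair `(h c₁, h c₂)` gives the (column, row) coordinates of a box of `λ`.
A coloring is encoded as the pair `ab` of functions `{1,…,l} → ℕ` that are constant on the cycles
of `γ` (resp. of `σ`), assigning to each point the color of its cycle. -/
noncomputable def Ncol {n : ℕ} (lam : YoungDiagram) (box : lam.cells)
    (l : ℕ) (hl : l ≤ n) (γ σ : Equiv.Perm (Fin n)) : ℕ :=
  Nat.card {ab : (Fin l → ℕ) × (Fin l → ℕ) //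
    (∀ x y : Fin l, γ.SameCycle (Fin.castLE hl x) (Fin.castLE hl y) → ab.1 x = ab.1 y) ∧
    (∀ x y : Fin l, σ.SameCycle (Fin.castLE hl x) (Fin.castLE hl y) → ab.2 x = ab.2 y) ∧
    (∀ x : Fin l, ∃ i : ℕ, (i, ab.1 x) ∈ lam) ∧
    (∀ x : Fin l, ∃ j : ℕ, (ab.2 x, j) ∈ lam) ∧
    (∀ x : Fin l, (x : ℕ) = 0 → ab.1 x = ((box : ℕ × ℕ)).2) ∧
    (∀ x : Fin l, (x : ℕ) = 0 → ab.2 x = ((box : ℕ × ℕ)).1) ∧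
    (∀ x : Fin l, ((ab.2 x, ab.1 x) : ℕ × ℕ) ∈ lam)}

open Finset Function Equiv
open scoped Nat

namespace Equiv.Perm

variable {α ι τ : Type*} {g σ : Perm α}

theorem SameCycle.eq_of_apply_eq {F : α → τ} (hF : ∀ a, F (g a) = F a) {a b : α}
    (h : g.SameCycle a b) : F a = F b := by
  obtain ⟨i, rfl⟩ := h
  symm
  induction i using Int.induction_on with
  | zero => simp
  | succ k ih => rw [add_comm, zpow_one_add, mul_apply, hF, ih]
  | pred k ih => rw [← ih, ← hF, ← mul_apply, ← zpow_one_add, add_sub_cancel]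

theorem apply_eq_iff_sameCycle_range {c : ι → α} (hg : ∀ a ∉ Set.range c, g a = a)
    (F : α → τ) :
    (∀ a, F (g a) = F a) ↔ ∀ i j, g.SameCycle (c i) (c j) → F (c i) = F (c j) := by
  refine ⟨fun hF i j h => h.eq_of_apply_eq hF, fun hF a => ?_⟩
  by_cases ha : a ∈ Set.range c
  · obtain ⟨i, rfl⟩ := ha
    by_cases hgi : g (c i) ∈ Set.range c
    · obtain ⟨j, hj⟩ := hgi
      rw [← hj]
      exact (hF i j ⟨1, by simp [hj]⟩).symm
    · rw [g.injective (hg _ hgi)]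
  · rw [hg a ha]

theorem apply_swap_eq [DecidableEq α] {F : α → τ} {a b : α} (hab : F a = F b) (x : α) :
    F (swap a b x) = F x := by
  rw [swap_apply_def]
  split_ifs <;> simp_all

theorem apply_mul_eq_iff {F : α → τ} (hσ : ∀ x, F (σ x) = F x) :
    (∀ x, F ((g * σ) x) = F x) ↔ ∀ x, F (g x) = F x := by
  refine ⟨fun h x => ?_, fun h x => by rw [mul_apply, h, hσ]⟩
  rw [← σ.apply_symm_apply x, ← mul_apply, h, hσ]

theorem mul_apply_eq_iff {F : α → τ} (hσ : ∀ x, F (σ x) = F x) :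
    (∀ x, F ((σ * g) x) = F x) ↔ ∀ x, F (g x) = F x := by
  simp only [mul_apply, hσ]

theorem card_filter_forall_apply_eq_self [Fintype α] [DecidableEq α] [Fintype ι] {c : ι → α}
    (hc : Injective c) :
    #{ρ : Perm α | ∀ i, ρ (c i) = c i} = (Fintype.card α - Fintype.card ι)! := by
  have hfix (ρ : Perm α) : (∀ i, ρ (c i) = c i) ↔ ∀ a, ¬ a ∉ Set.range c → ρ a = a := by
    simp
  rw [← Fintype.card_subtype, Fintype.card_congr (Equiv.subtypeEquivRight hfix),
    ← Fintype.card_congr (Perm.subtypeEquivSubtypePerm _), Fintype.card_perm,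
    Fintype.card_subtype_compl, Set.card_range_of_injective hc]

end Equiv.Perm

theorem Equiv.card_filter_forall_apply_eq {α ι X : Type*} [Fintype α] [DecidableEq α] [Fintype ι]
    [Fintype X] [DecidableEq X] (hcard : Fintype.card α = Fintype.card X) {c : ι → α}
    (hc : Injective c) {f : ι → X} (hf : Injective f) :
    #{s : α ≃ X | ∀ i, s (c i) = f i} = (Fintype.card α - Fintype.card ι)! := by
  let e := Fintype.equivOfCardEq hcard
  obtain ⟨π₀, hπ₀⟩ := Perm.exists_extending_pair c (e.symm ∘ f) hc (e.symm.injective.comp hf)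
  let s₀ : α ≃ X := π₀.trans e
  rw [← Perm.card_filter_forall_apply_eq_self hc]
  refine Finset.card_equiv ((Equiv.refl α).equivCongr s₀.symm) fun s => ?_
  simp [s₀, Equiv.symm_apply_eq, hπ₀]

section

variable {n l : ℕ} {lam : YoungDiagram}

theorem youngSym_coeff (t : Fin n ≃ lam.cells) (τ : Perm (Fin n)) :
    (youngSym lam t).coeff τ = ∑ γ : Perm (Fin n), ∑ σ : Perm (Fin n),
      if InColStab lam t γ ∧ InRowStab lam t σ ∧ γ * σ = τ then ((Perm.sign γ : ℤ) : ℂ)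
      else (0 : ℂ) := by
  simp only [youngSym, MonoidAlgebra.coeff_sum, Finsupp.finsetSum_apply]
  refine sum_congr rfl fun γ _ => sum_congr rfl fun σ _ => ?_
  split_ifs <;> simp_all

theorem inColStab_conj_iff (t : Fin n ≃ lam.cells) (π γ : Perm (Fin n)) :
    InColStab lam t (π⁻¹ * γ * π) ↔ InColStab lam (π.symm.trans t) γ := by
  simp only [InColStab, Perm.mul_apply, Equiv.trans_apply]
  exact ⟨fun h k => by simpa using h (π⁻¹ k), fun h m => by simpa using h (π m)⟩

theorem inRowStab_conj_iff (t : Fin n ≃ lam.cells) (π σ : Perm (Fin n)) :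
    InRowStab lam t (π⁻¹ * σ * π) ↔ InRowStab lam (π.symm.trans t) σ := by
  simp only [InRowStab, Perm.mul_apply, Equiv.trans_apply]
  exact ⟨fun h k => by simpa using h (π⁻¹ k), fun h m => by simpa using h (π m)⟩

theorem coeff_conj_youngSym (t : Fin n ≃ lam.cells) (π θ : Perm (Fin n)) :
    (MonoidAlgebra.of ℂ _ π * youngSym lam t * MonoidAlgebra.of ℂ _ π⁻¹).coeff θ =
      ∑ γ : Perm (Fin n), ∑ σ : Perm (Fin n),
        if InColStab lam (π.symm.trans t) γ ∧ InRowStab lam (π.symm.trans t) σ ∧ γ * σ = θ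
        then ((Perm.sign γ : ℤ) : ℂ) else 0 := by
  rw [MonoidAlgebra.of_apply, MonoidAlgebra.of_apply, MonoidAlgebra.coeff_mul_single_apply,
    MonoidAlgebra.coeff_single_mul_apply, inv_inv, one_mul, mul_one, youngSym_coeff]
  let conj : Perm (Fin n) ≃ Perm (Fin n) := (MulAut.conj π).toEquiv
  refine Fintype.sum_equiv conj _ _ fun γ => Fintype.sum_equiv conj _ _ fun σ => ?_
  simp only [conj, MulEquiv.toEquiv_eq_coe, MulEquiv.coe_toEquiv, MulAut.conj_apply,
    ← inColStab_conj_iff, ← inRowStab_conj_iff]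
  have hsign : Perm.sign (π * γ * π⁻¹) = Perm.sign γ := by
    simp only [map_mul, map_inv, mul_inv_cancel_comm]
  have hprod : π * γ * π⁻¹ * (π * σ * π⁻¹) = θ ↔ γ * σ = π⁻¹ * (θ * π) := by
    constructor
    · rintro rfl; group
    · intro h; rw [show π * γ * π⁻¹ * (π * σ * π⁻¹) = π * (γ * σ) * π⁻¹ by group, h]; group
  simp only [hsign, hprod, show π⁻¹ * (π * γ * π⁻¹) * π = γ by group,
    show π⁻¹ * (π * σ * π⁻¹) * π = σ by group]

noncomputable def compatibleTableaux (box : lam.cells) (γ σ : Perm (Fin n)) :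
    Finset (Fin n ≃ lam.cells) :=
  {s | InColStab lam s γ ∧ InRowStab lam s σ ∧ ∀ i : Fin n, (i : ℕ) = 0 → s i = box}

theorem genChar_coeff_eq_sum_card_compatibleTableaux {box : lam.cells} {t : Fin n ≃ lam.cells}
    (ht : ∀ i : Fin n, (i : ℕ) = 0 → t i = box) (θ : Perm (Fin n)) :
    (genChar lam t).coeff θ = ((n - 1)! : ℂ)⁻¹ * ∑ γ : Perm (Fin n), ∑ σ : Perm (Fin n),
      if γ * σ = θ then ((Perm.sign γ : ℤ) : ℂ) * #(compatibleTableaux box γ σ) else 0 := by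
  -- `π ↦ t ∘ π⁻¹` identifies the stabiliser of `1` with the tableaux having `1` in `box`.
  let e : Perm (Fin n) ≃ (Fin n ≃ lam.cells) :=
    { toFun := fun π => π.symm.trans t
      invFun := fun s => (s.trans t.symm).symm
      left_inv := fun π => Equiv.ext fun _ => by simp
      right_inv := fun s => Equiv.ext fun _ => by simp }
  have hfix (π : Perm (Fin n)) :
      (∀ i : Fin n, (i : ℕ) = 0 → π i = i) ↔ ∀ i : Fin n, (i : ℕ) = 0 → e π i = box := by
    refine forall₂_congr fun i hi => ?_
    show _ ↔ t (π.symm i) = box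
    rw [← ht i hi, t.apply_eq_iff_eq, Equiv.symm_apply_eq, eq_comm]
  rw [genChar, MonoidAlgebra.coeff_smul, Finsupp.smul_apply, smul_eq_mul,
    MonoidAlgebra.coeff_sum, Finsupp.finsetSum_apply]
  congr 1
  calc _ = ∑ π : Perm (Fin n), if ∀ i : Fin n, (i : ℕ) = 0 → e π i = box then
          ∑ γ : Perm (Fin n), ∑ σ : Perm (Fin n),
            if InColStab lam (e π) γ ∧ InRowStab lam (e π) σ ∧ γ * σ = θ
            then ((Perm.sign γ : ℤ) : ℂ) else 0 else 0 := by
        refine sum_congr rfl fun π _ => ?_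
        by_cases hπ : ∀ i : Fin n, (i : ℕ) = 0 → π i = i
        · rw [if_pos hπ, if_pos ((hfix π).1 hπ), coeff_conj_youngSym]
          rfl
        · rw [if_neg hπ, if_neg (mt (hfix π).2 hπ), MonoidAlgebra.coeff_zero, Finsupp.zero_apply]
    _ = ∑ s : Fin n ≃ lam.cells, if ∀ i : Fin n, (i : ℕ) = 0 → s i = box then
          ∑ γ : Perm (Fin n), ∑ σ : Perm (Fin n),
            if InColStab lam s γ ∧ InRowStab lam s σ ∧ γ * σ = θ
            then ((Perm.sign γ : ℤ) : ℂ) else 0 else 0 :=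
        Fintype.sum_equiv e _ _ fun _ => rfl
    _ = _ := by
        simp only [ite_sum_zero]
        rw [sum_comm]
        refine sum_congr rfl fun γ _ => ?_
        rw [sum_comm]
        refine sum_congr rfl fun σ _ => ?_
        split_ifs with h <;> simp [h, compatibleTableaux, ← ite_and, Finset.sum_ite, mul_comm,
          and_comm, and_assoc]

/-- A coloring counted by `Ncol` is recorded as the map sending each point `x` to the box
`(h(cycle of x in σ), h(cycle of x in γ))`. -/
noncomputable def boxColorings (box : lam.cells) (hln : l ≤ n) (γ σ : Perm (Fin n)) :
    Finset (Fin l → lam.cells) :=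
  {β | (∀ x y, γ.SameCycle (Fin.castLE hln x) (Fin.castLE hln y) →
          (β x : ℕ × ℕ).2 = (β y : ℕ × ℕ).2) ∧
        (∀ x y, σ.SameCycle (Fin.castLE hln x) (Fin.castLE hln y) →
          (β x : ℕ × ℕ).1 = (β y : ℕ × ℕ).1) ∧
        ∀ x : Fin l, (x : ℕ) = 0 → β x = box}

theorem Ncol_eq_card_boxColorings (box : lam.cells) (hln : l ≤ n) (γ σ : Perm (Fin n)) :
    Ncol lam box l hln γ σ = #(boxColorings box hln γ σ) := by
  rw [Ncol, ← Nat.card_eq_finsetCard]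
  refine Nat.card_congr
    { toFun := fun ab => ⟨fun x => ⟨(ab.1.2 x, ab.1.1 x), by simpa using ab.2.2.2.2.2.2.2 x⟩, ?_⟩
      invFun := fun β => ⟨(fun x => (β.1 x : ℕ × ℕ).2, fun x => (β.1 x : ℕ × ℕ).1), ?_⟩
      left_inv := fun _ => rfl
      right_inv := fun _ => rfl }
  · obtain ⟨ab, hγ, hσ, -, -, hcol, hrow, -⟩ := ab
    simp only [boxColorings, mem_filter, mem_univ, true_and]
    exact ⟨hγ, hσ, fun x hx => Subtype.ext (Prod.ext (hrow x hx) (hcol x hx))⟩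
  · obtain ⟨β, hβ⟩ := β
    simp only [boxColorings, mem_filter, mem_univ, true_and] at hβ
    obtain ⟨hγ, hσ, hbox⟩ := hβ
    have hmem (x : Fin l) : (β x : ℕ × ℕ) ∈ lam := (β x).2
    refine ⟨hγ, hσ, fun x => ⟨_, hmem x⟩, fun x => ⟨_, hmem x⟩,
      fun x hx => congrArg (·.1.2) (hbox x hx), fun x hx => congrArg (·.1.1) (hbox x hx), hmem⟩

theorem apply_eq_self_of_notMem_range_castLE (hln : l ≤ n) {g : Perm (Fin n)}
    (hg : ∀ i : Fin n, l ≤ (i : ℕ) → g i = i) : ∀ a ∉ Set.range (Fin.castLE hln), g a = a :=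
  fun a ha => hg a (by simpa [Fin.range_castLE] using ha)

theorem mem_compatibleTableaux_iff (hl : 0 < l) (hln : l ≤ n) {box : lam.cells}
    {γ σ : Perm (Fin n)} (hγ : ∀ i : Fin n, l ≤ (i : ℕ) → γ i = i)
    (hσ : ∀ i : Fin n, l ≤ (i : ℕ) → σ i = i) {s : Fin n ≃ lam.cells} :
    s ∈ compatibleTableaux box γ σ ↔
      (fun x => s (Fin.castLE hln x)) ∈ boxColorings box hln γ σ := by
  simp only [compatibleTableaux, boxColorings, mem_filter, mem_univ, true_and]
  refine and_congr (Perm.apply_eq_iff_sameCycle_range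
    (apply_eq_self_of_notMem_range_castLE hln hγ) fun m => (s m : ℕ × ℕ).2)
    (and_congr (Perm.apply_eq_iff_sameCycle_range
    (apply_eq_self_of_notMem_range_castLE hln hσ) fun m => (s m : ℕ × ℕ).1)
    ⟨fun h x hx => h _ hx, fun h i hi => h ⟨i, by omega⟩ hi⟩)

theorem card_compatibleTableaux (hlam : lam.card = n) (hl : 0 < l) (hln : l ≤ n)
    (box : lam.cells) {γ σ : Perm (Fin n)} (hγ : ∀ i : Fin n, l ≤ (i : ℕ) → γ i = i)
    (hσ : ∀ i : Fin n, l ≤ (i : ℕ) → σ i = i) :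
    #(compatibleTableaux box γ σ) = #{β ∈ boxColorings box hln γ σ | Injective β} * (n - l)! := by
  have hmaps : Set.MapsTo (fun (s : Fin n ≃ lam.cells) x => s (Fin.castLE hln x))
      (compatibleTableaux box γ σ)
      ({β ∈ boxColorings box hln γ σ | Injective β} : Finset _) := fun s hs =>
    mem_filter.2 ⟨(mem_compatibleTableaux_iff hl hln hγ hσ).1 hs,
      s.injective.comp (Fin.castLE_injective hln)⟩
  rw [card_eq_sum_card_fiberwise hmaps]
  refine sum_const_nat fun β hβ => ?_
  obtain ⟨hβ, hβinj⟩ := mem_filter.1 hβ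
  have hfiber : {s ∈ compatibleTableaux box γ σ | (fun x => s (Fin.castLE hln x)) = β} =
      ({s | ∀ x, s (Fin.castLE hln x) = β x} : Finset (Fin n ≃ lam.cells)) := by
    ext s
    simp only [mem_filter, mem_univ, true_and, mem_compatibleTableaux_iff hl hln hγ hσ, funext_iff]
    exact ⟨fun h => h.2, fun h => ⟨(funext h : _ = β) ▸ hβ, h⟩⟩
  rw [hfiber]
  convert Equiv.card_filter_forall_apply_eq (by simp [hlam]) (Fin.castLE_injective hln) hβinj <;>
    simp

theorem eq_of_inColStab_of_inRowStab {s : Fin n ≃ lam.cells} {γ σ : Perm (Fin n)}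
    (hγ : InColStab lam s γ) (hσ : InRowStab lam s σ) {x : Fin n} (hx : γ (σ x) = x) :
    σ x = x :=
  s.injective (Subtype.ext (Prod.ext (hσ x) (by simpa [hx] using (hγ (σ x)).symm)))

theorem compatibleTableaux_eq_empty (box : lam.cells) {γ σ : Perm (Fin n)} {x : Fin n}
    (hx : γ (σ x) = x) (hσx : σ x ≠ x) : compatibleTableaux box γ σ = ∅ :=
  filter_eq_empty_iff.2 fun _ _ hs => hσx (eq_of_inColStab_of_inRowStab hs.1 hs.2.1 hx)

theorem ite_card_compatibleTableaux (hlam : lam.card = n) (hl : 0 < l) (hln : l ≤ n)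
    (box : lam.cells) {θ : Perm (Fin n)} (hθ : ∀ i : Fin n, l ≤ (i : ℕ) → θ i = i)
    (γ σ : Perm (Fin n)) :
    (if γ * σ = θ then ((Perm.sign γ : ℤ) : ℂ) * #(compatibleTableaux box γ σ) else 0) =
      (if (∀ i : Fin n, l ≤ (i : ℕ) → γ i = i) ∧ (∀ i : Fin n, l ≤ (i : ℕ) → σ i = i) ∧
          γ * σ = θ
        then ((Perm.sign γ : ℤ) : ℂ) * #{β ∈ boxColorings box hln γ σ | Injective β} else 0) *
        (n - l)! := by
  by_cases hγσ : γ * σ = θ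
  swap
  · simp [hγσ]
  have hfix (x : Fin n) : γ (σ x) = θ x := by rw [← hγσ, Perm.mul_apply]
  by_cases hσ : ∀ i : Fin n, l ≤ (i : ℕ) → σ i = i
  · have hγ (i : Fin n) (hi : l ≤ (i : ℕ)) : γ i = i := by simpa [hσ i hi, hθ i hi] using hfix i
    rw [if_pos hγσ, if_pos ⟨hγ, hσ, hγσ⟩, card_compatibleTableaux hlam hl hln box hγ hσ]
    push_cast
    ring
  · obtain ⟨x, hx, hσx⟩ := not_forall₂.1 hσ
    rw [if_pos hγσ, if_neg fun h => hσx (h.2.1 x hx),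
      compatibleTableaux_eq_empty box ((hfix x).trans (hθ x hx)) hσx]
    simp

theorem mem_boxColorings_iff (hln : l ≤ n) {box : lam.cells} {γ σ : Perm (Fin n)}
    (hγ : ∀ i : Fin n, l ≤ (i : ℕ) → γ i = i) (hσ : ∀ i : Fin n, l ≤ (i : ℕ) → σ i = i)
    {β : Fin l → lam.cells} :
    β ∈ boxColorings box hln γ σ ↔
      (∀ m, extend (Fin.castLE hln) (fun x => (β x : ℕ × ℕ).2) 0 (γ m) =
        extend (Fin.castLE hln) (fun x => (β x : ℕ × ℕ).2) 0 m) ∧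
      (∀ m, extend (Fin.castLE hln) (fun x => (β x : ℕ × ℕ).1) 0 (σ m) =
        extend (Fin.castLE hln) (fun x => (β x : ℕ × ℕ).1) 0 m) ∧
      ∀ x : Fin l, (x : ℕ) = 0 → β x = box := by
  rw [Perm.apply_eq_iff_sameCycle_range (apply_eq_self_of_notMem_range_castLE hln hγ),
    Perm.apply_eq_iff_sameCycle_range (apply_eq_self_of_notMem_range_castLE hln hσ)]
  simp only [(Fin.castLE_injective hln).extend_apply, boxColorings, mem_filter, mem_univ, true_and]

theorem sum_sign_mem_boxColorings_eq_zero (hln : l ≤ n) (box : lam.cells) (θ : Perm (Fin n))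
    {β : Fin l → lam.cells} (hβ : ¬ Injective β) :
    ∑ γ : Perm (Fin n), ∑ σ : Perm (Fin n),
      (if (∀ i : Fin n, l ≤ (i : ℕ) → γ i = i) ∧ (∀ i : Fin n, l ≤ (i : ℕ) → σ i = i) ∧
          γ * σ = θ ∧ β ∈ boxColorings box hln γ σ
        then ((Perm.sign γ : ℤ) : ℂ) else 0) = 0 := by
  obtain ⟨x, y, hxy, hne⟩ := not_injective_iff.1 hβ
  set τ := swap (Fin.castLE hln x) (Fin.castLE hln y)
  have hτne : Fin.castLE hln x ≠ Fin.castLE hln y := (Fin.castLE_injective hln).ne hne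
  have hτ : ∀ i : Fin n, l ≤ (i : ℕ) → τ i = i := fun i hi =>
    swap_apply_of_ne_of_ne (by rintro rfl; simp at hi; omega) (by rintro rfl; simp at hi; omega)
  have hinv (F : Fin l → ℕ) (hF : F x = F y) :
      ∀ m, extend (Fin.castLE hln) F 0 (τ m) = extend (Fin.castLE hln) F 0 m :=
    Perm.apply_swap_eq (by simp [(Fin.castLE_injective hln).extend_apply, hF])
  have hγ (γ : Perm (Fin n)) : (∀ i : Fin n, l ≤ (i : ℕ) → (γ * τ) i = i) ↔
      ∀ i : Fin n, l ≤ (i : ℕ) → γ i = i :=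
    forall₂_congr fun i hi => by rw [Perm.mul_apply, hτ i hi]
  have hσ (σ : Perm (Fin n)) : (∀ i : Fin n, l ≤ (i : ℕ) → (τ * σ) i = i) ↔
      ∀ i : Fin n, l ≤ (i : ℕ) → σ i = i :=
    forall₂_congr fun i hi => by rw [Perm.mul_apply, swap_apply_eq_iff, hτ i hi]
  have hcond (γ σ : Perm (Fin n)) :
      ((∀ i : Fin n, l ≤ (i : ℕ) → (γ * τ) i = i) ∧ (∀ i : Fin n, l ≤ (i : ℕ) → (τ * σ) i = i) ∧
        γ * τ * (τ * σ) = θ ∧ β ∈ boxColorings box hln (γ * τ) (τ * σ)) ↔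
      ((∀ i : Fin n, l ≤ (i : ℕ) → γ i = i) ∧ (∀ i : Fin n, l ≤ (i : ℕ) → σ i = i) ∧
        γ * σ = θ ∧ β ∈ boxColorings box hln γ σ) := by
    rw [hγ, hσ, show γ * τ * (τ * σ) = γ * σ by simp [τ, mul_assoc]]
    refine and_congr_right fun hγl => and_congr_right fun hσl => and_congr_right fun _ => ?_
    rw [mem_boxColorings_iff hln ((hγ γ).2 hγl) ((hσ σ).2 hσl), mem_boxColorings_iff hln hγl hσl,
      Perm.apply_mul_eq_iff (hinv (fun x => (β x : ℕ × ℕ).2) (by rw [hxy])),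
      Perm.mul_apply_eq_iff (hinv (fun x => (β x : ℕ × ℕ).1) (by rw [hxy]))]
  have hsign (γ : Perm (Fin n)) : Perm.sign (γ * τ) = -Perm.sign γ := by
    rw [map_mul, Perm.sign_swap hτne, mul_neg_one]
  rw [← self_eq_neg, ← sum_neg_distrib]
  refine Fintype.sum_equiv (Equiv.mulRight τ) _ _ fun γ => ?_
  rw [← sum_neg_distrib]
  refine Fintype.sum_equiv (Equiv.mulLeft τ) _ _ fun σ => ?_
  simp only [coe_mulRight, coe_mulLeft, hcond, hsign]
  split_ifs <;> simp

theorem sum_sign_card_not_injective_eq_zero (hln : l ≤ n) (box : lam.cells) (θ : Perm (Fin n)) :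
    ∑ γ : Perm (Fin n), ∑ σ : Perm (Fin n),
      (if (∀ i : Fin n, l ≤ (i : ℕ) → γ i = i) ∧ (∀ i : Fin n, l ≤ (i : ℕ) → σ i = i) ∧
          γ * σ = θ
        then ((Perm.sign γ : ℤ) : ℂ) * #{β ∈ boxColorings box hln γ σ | ¬ Injective β} else 0) =
      0 := by
  have hcard (γ σ : Perm (Fin n)) : (#{β ∈ boxColorings box hln γ σ | ¬ Injective β} : ℂ) =
      ∑ β : Fin l → lam.cells, if β ∈ boxColorings box hln γ σ ∧ ¬ Injective β then 1 else 0 := by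
    rw [sum_boole]
    congr 2
    ext
    simp
  simp only [hcard, mul_sum, ite_sum_zero]
  rw [Finset.sum_congr rfl fun γ _ => sum_comm, sum_comm]
  refine sum_eq_zero fun β _ => ?_
  by_cases hβ : Injective β
  · simp [hβ]
  · refine (Finset.sum_congr rfl fun γ _ => Finset.sum_congr rfl fun σ _ => ?_).trans
      (sum_sign_mem_boxColorings_eq_zero hln box θ hβ)
    simp [hβ, ← ite_and, and_assoc]

theorem sum_sign_Ncol_eq_sum_sign_card_injective (hln : l ≤ n) (box : lam.cells)
    (θ : Perm (Fin n)) :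
    ∑ γ : Perm (Fin n), ∑ σ : Perm (Fin n),
      (if (∀ i : Fin n, l ≤ (i : ℕ) → γ i = i) ∧ (∀ i : Fin n, l ≤ (i : ℕ) → σ i = i) ∧
          γ * σ = θ
        then ((Perm.sign γ : ℤ) : ℂ) * (Ncol lam box l hln γ σ : ℂ) else 0) =
    ∑ γ : Perm (Fin n), ∑ σ : Perm (Fin n),
      (if (∀ i : Fin n, l ≤ (i : ℕ) → γ i = i) ∧ (∀ i : Fin n, l ≤ (i : ℕ) → σ i = i) ∧
          γ * σ = θ
        then ((Perm.sign γ : ℤ) : ℂ) * #{β ∈ boxColorings box hln γ σ | Injective β} else 0) := by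
  have hsplit (γ σ : Perm (Fin n)) : (Ncol lam box l hln γ σ : ℂ) =
      #{β ∈ boxColorings box hln γ σ | Injective β} +
        #{β ∈ boxColorings box hln γ σ | ¬ Injective β} := by
    rw [Ncol_eq_card_boxColorings, ← card_filter_add_card_filter_not
      (fun β : Fin l → lam.cells => Injective β), Nat.cast_add]
  simp only [hsplit, mul_add, ite_add_zero, sum_add_distrib, sum_sign_card_not_injective_eq_zero,
    add_zero]

end

theorem genChar_eq_signed_sum_Ncol_general
    {n : ℕ} (lam : YoungDiagram)
    (hlam : lam.card = n)
    (box : lam.cells)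
    (t : Fin n ≃ lam.cells) (ht : ∀ i : Fin n, (i : ℕ) = 0 → t i = box)
    (l : ℕ) (hl2 : 2 ≤ l) (hln : l ≤ n)
    (θ : Equiv.Perm (Fin n)) (hθ : ∀ i : Fin n, l ≤ (i : ℕ) → θ i = i) :
    (genChar lam t).coeff θ =
      (((n - 1).descFactorial (l - 1) : ℕ) : ℂ)⁻¹ *
        ∑ γ : Equiv.Perm (Fin n), ∑ σ : Equiv.Perm (Fin n),
          if (∀ i : Fin n, l ≤ (i : ℕ) → γ i = i) ∧ (∀ i : Fin n, l ≤ (i : ℕ) → σ i = i) ∧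
              γ * σ = θ then
            ((Equiv.Perm.sign γ : ℤ) : ℂ) * (Ncol lam box l hln γ σ : ℂ)
          else 0 := by
  have hfact : (n - l)! * (n - 1).descFactorial (l - 1) = (n - 1)! := by
    rw [← Nat.factorial_mul_descFactorial (show l - 1 ≤ n - 1 by omega),
      show n - 1 - (l - 1) = n - l by omega]
  rw [genChar_coeff_eq_sum_card_compatibleTableaux ht, ← hfact, Nat.cast_mul, mul_inv,
    mul_comm ((n - l)! : ℂ)⁻¹, mul_assoc, sum_sign_Ncol_eq_sum_sign_card_injective]
  congr 1
  simp only [ite_card_compatibleTableaux hlam (by omega) hln box hθ, ← sum_mul]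
  rw [mul_comm _ ((n - l)! : ℂ), inv_mul_cancel_left₀ (mod_cast (n - l).factorial_ne_zero)]

/-- **Main Theorem: the Stanley–Féray–Śniady formula for generalized characters.**
Let `λ ⊢ n`, `μ ⊢ n-1` with `λ → μ`, fix a `λ`-tableau `t` with `1` in the box `λ∖μ`, let
`2 ≤ l ≤ n` and `θ ∈ S_l`.  Then
`φ_{λ,μ}(θ) = (1/(n-1)_{l-1}) ∑_{γ,σ ∈ S_l, γσ=θ} sign(γ) N^{λ,μ}(γ,σ)`, where
`φ_{λ,μ} = (1/(n-1)!) ∑_{π ∈ S̃_{n-1}} π E_t π⁻¹` and `(n-1)_{l-1}` is the falling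
factorial. -/
theorem genChar_eq_signed_sum_Ncol
    {n : ℕ} (hn : 2 ≤ n) (lam mu : YoungDiagram)
    (hlam : lam.card = n) (hmu : mu.card = n - 1) (hsub : mu ≤ lam)
    (box : lam.cells) (hbox : (box : ℕ × ℕ) ∉ mu)
    (t : Fin n ≃ lam.cells) (ht : ∀ i : Fin n, (i : ℕ) = 0 → t i = box)
    (l : ℕ) (hl2 : 2 ≤ l) (hln : l ≤ n)
    (θ : Equiv.Perm (Fin n)) (hθ : ∀ i : Fin n, l ≤ (i : ℕ) → θ i = i) :
    (genChar lam t).coeff θ =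
      (((n - 1).descFactorial (l - 1) : ℕ) : ℂ)⁻¹ *
        ∑ γ : Equiv.Perm (Fin n), ∑ σ : Equiv.Perm (Fin n),
          if (∀ i : Fin n, l ≤ (i : ℕ) → γ i = i) ∧ (∀ i : Fin n, l ≤ (i : ℕ) → σ i = i) ∧
              γ * σ = θ then
            ((Equiv.Perm.sign γ : ℤ) : ℂ) * (Ncol lam box l hln γ σ : ℂ)
          else 0 :=
  genChar_eq_signed_sum_Ncol_general lam hlam box t ht l hl2 hln θ hθ
end
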